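/- Let n2 be a positive integer, p2 ∈ (0,1), q2 ∈ (0,1) and α ∈ (0,1). If 1 − F_{n2,q2}(F_{n2,p2}^{-1}(1−α)) ≥ 1/2 + sqrt(2/(e·n2·q2·(1−q2))), then F_{n2,p2}^{-1}(1−α) ≤ n2·q2 − 1. -/

import Mathlib

/-- The probability mass function of the Binomial(n, p) distribution. -/
noncomputable def binomPMF (n : ℕ) (p : ℝ) (k : ℕ) : ℝ :=
  (n.choose k : ℝ) * p ^ k * (1 - p) ^ (n - k)

/-- The cumulative distribution function of the Binomial(n, p) distribution,
`F_{n,p}(x) = P(Bin(n,p) ≤ x)`. -/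
noncomputable def binomCDF (n : ℕ) (p : ℝ) (x : ℝ) : ℝ :=
  ∑ k ∈ Finset.range (n + 1), if (k : ℝ) ≤ x then binomPMF n p k else 0

/-- The quantile function `F_{n,p}⁻¹(u) = inf {x : F_{n,p}(x) ≥ u}`. -/
noncomputable def binomQuantile (n : ℕ) (p : ℝ) (u : ℝ) : ℝ :=
  sInf {x : ℝ | u ≤ binomCDF n p x}


/-!
The quantile `k = F_{n,p}⁻¹(1 - α)` is a natural number, so it suffices to show
`1/2 - δ < F_{n,q}(k)` whenever `k > nq - 1`, where `δ = √(2 / (e n q (1 - q)))`. This is trivial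
when `δ > 1/2`. Otherwise `e n q (1 - q) ≥ 8`, and with `c = ⌈nq⌉ ≤ k + 1` we have
`F(k) ≥ F(c - 1) = F(c) - P(X = c)`.

* `F(c) ≥ 1/2`: the lower tail of `Bin(n, q)` is an incomplete Beta integral, so it suffices that
  the kernel `t ^ a (1 - t) ^ j` has at least as much mass on `[0, p]` as on `[p, 1]` for
  `p = (a + 1) / (a + j + 1)`. The substitution `t ↦ p² / t` maps `[p², p]` onto `[p, 1]`, and the
  resulting pointwise inequality holds because the derivative of the logarithm of
  `x ^ (2m + j) (1 - x) ^ j / (x - p²) ^ j` is `-(m + j)(1 + p)(x - p)² / (x (1 - x)(x - p²))`.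
* `P(X = c) < δ`: Stirling's bounds give `P(X = c) ≤ e √n / (2π √(c (n - c)))`.
-/
open Finset Real MeasureTheory
open scoped Nat

lemma binomPMF_nonneg {n : ℕ} {p : ℝ} (hp₀ : 0 ≤ p) (hp₁ : p ≤ 1) (k : ℕ) :
    0 ≤ binomPMF n p k := by
  have : 0 ≤ 1 - p := by linarith
  unfold binomPMF
  positivity

lemma binomCDF_nonneg {n : ℕ} {p : ℝ} (hp₀ : 0 ≤ p) (hp₁ : p ≤ 1) (x : ℝ) :
    0 ≤ binomCDF n p x :=
  sum_nonneg fun k _ => by split_ifs <;> simp [binomPMF_nonneg hp₀ hp₁]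

lemma binomCDF_mono {n : ℕ} {p : ℝ} (hp₀ : 0 ≤ p) (hp₁ : p ≤ 1) : Monotone (binomCDF n p) :=
  fun x y hxy => sum_le_sum fun k _ => by
    split_ifs with hx hy hy <;> first | rfl | exact binomPMF_nonneg hp₀ hp₁ k | linarith

lemma binomCDF_of_neg {n : ℕ} {p x : ℝ} (hx : x < 0) : binomCDF n p x = 0 :=
  sum_eq_zero fun k _ => if_neg (by linarith [k.cast_nonneg (α := ℝ)])

lemma binomCDF_natFloor {n : ℕ} {p x : ℝ} (hx : 0 ≤ x) :
    binomCDF n p x = binomCDF n p ⌊x⌋₊ := by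
  unfold binomCDF
  congr! 2 with k
  rw [Nat.cast_le, Nat.le_floor_iff hx]

lemma binomCDF_natCast {n k : ℕ} (p : ℝ) (hk : k ≤ n) :
    binomCDF n p k = ∑ j ∈ range (k + 1), binomPMF n p j := by
  unfold binomCDF
  simp_rw [Nat.cast_le, ← sum_filter]
  congr 1
  ext j
  simp only [mem_filter, mem_range]
  omega

lemma nonneg_of_le_binomCDF {n : ℕ} {p u x : ℝ} (hu : 0 < u) (hx : u ≤ binomCDF n p x) :
    0 ≤ x := by
  by_contra! hneg
  rw [binomCDF_of_neg hneg] at hx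
  linarith

/- For `u ≤ 0` the set `{x | u ≤ F(x)}` is unbounded below and for large `u` it may be empty;
in both cases `sInf` returns the junk value `0`, which is still a natural number. -/
lemma exists_binomQuantile_eq_natCast (n : ℕ) (p u : ℝ) :
    ∃ k : ℕ, binomQuantile n p u = k := by
  rcases le_or_gt u 0 with hu | hu
  · refine ⟨0, (Real.sInf_of_not_bddBelow ?_).trans Nat.cast_zero.symm⟩
    rintro ⟨b, hb⟩
    have hmem : u ≤ binomCDF n p (min b 0 - 1) := by
      rwa [binomCDF_of_neg (by linarith [min_le_right b 0])]
    linarith [hb hmem, min_le_left b 0]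
  by_cases hT : ∃ k : ℕ, u ≤ binomCDF n p k
  · refine ⟨Nat.find hT, IsLeast.csInf_eq ⟨Nat.find_spec hT, fun x (hx : u ≤ _) => ?_⟩⟩
    have hx₀ := nonneg_of_le_binomCDF hu hx
    rw [binomCDF_natFloor hx₀] at hx
    exact (Nat.cast_le.mpr (Nat.find_min' hT hx)).trans (Nat.floor_le hx₀)
  · have hS : {x : ℝ | u ≤ binomCDF n p x} = ∅ :=
      Set.eq_empty_of_forall_notMem fun x (hx : u ≤ _) => by
        rw [binomCDF_natFloor (nonneg_of_le_binomCDF hu hx)] at hx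
        exact hT ⟨_, hx⟩
    exact ⟨0, by simp [binomQuantile, hS]⟩

lemma binomPMF_eq_eval_bernsteinPolynomial (n k : ℕ) (p : ℝ) :
    binomPMF n p k = (bernsteinPolynomial ℝ n k).eval p := by
  simp [binomPMF, bernsteinPolynomial]

lemma continuous_binomPMF (n k : ℕ) : Continuous fun p => binomPMF n p k := by
  unfold binomPMF
  fun_prop

lemma derivative_sum_bernsteinPolynomial (R : Type*) [CommRing R] (n a : ℕ) :
    Polynomial.derivative (∑ j ∈ range (a + 1), bernsteinPolynomial R (n + 1) j) =
      -(n + 1) * bernsteinPolynomial R n a := by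
  induction a with
  | zero => simp [bernsteinPolynomial.derivative_zero]
  | succ a ih =>
    rw [sum_range_succ, Polynomial.derivative_add, ih, bernsteinPolynomial.derivative_succ_aux]
    ring

lemma hasDerivAt_sum_binomPMF (n a : ℕ) (q : ℝ) :
    HasDerivAt (fun q => ∑ j ∈ range (a + 1), binomPMF (n + 1) q j)
      (-(n + 1) * binomPMF n q a) q := by
  have := (∑ j ∈ range (a + 1), bernsteinPolynomial ℝ (n + 1) j).hasDerivAt q
  rw [derivative_sum_bernsteinPolynomial] at this
  simpa [Polynomial.eval_finsetSum, binomPMF_eq_eval_bernsteinPolynomial] using this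

lemma sum_binomPMF_eq_one_sub_integral (n a : ℕ) (q : ℝ) :
    ∑ j ∈ range (a + 1), binomPMF (n + 1) q j = 1 - (n + 1) * ∫ t in 0..q, binomPMF n t a := by
  have hFTC := intervalIntegral.integral_eq_sub_of_hasDerivAt
    (fun t _ => hasDerivAt_sum_binomPMF n a t)
    ((continuous_const.mul (continuous_binomPMF n a)).intervalIntegrable 0 q)
  have hzero : ∑ j ∈ range (a + 1), binomPMF (n + 1) 0 j = 1 := by
    simp [sum_range_succ', binomPMF]
  rw [intervalIntegral.integral_const_mul, hzero] at hFTC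
  linarith

section TailComparison

variable {m j : ℕ} {p : ℝ}

lemma hasDerivAt_log_ratio (hp : p * (m + j) = m) {x : ℝ} (hx : x ∈ Set.Ioo (p ^ 2) 1) :
    HasDerivAt (fun x => (2 * m + j) * log x + j * log (1 - x) - j * log (x - p ^ 2))
      (-((m + j) * (1 + p) * (x - p) ^ 2) / (x * (1 - x) * (x - p ^ 2))) x := by
  obtain ⟨hx₁, hx₂⟩ := hx
  have hx₀ : 0 < x := (sq_nonneg p).trans_lt hx₁
  have h₁ := (hasDerivAt_log hx₀.ne').const_mul (2 * m + j : ℝ)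
  have h₂ := (((hasDerivAt_id' x).const_sub 1).log (by simp; linarith)).const_mul (j : ℝ)
  have h₃ := (((hasDerivAt_id' x).sub_const (p ^ 2)).log (by simp; linarith)).const_mul (j : ℝ)
  refine ((h₁.add h₂).sub h₃).congr_deriv ?_
  have : 1 - x ≠ 0 := by linarith
  have : x - p ^ 2 ≠ 0 := by linarith
  field_simp
  linear_combination (-((1 - x) * (x - p ^ 2) + x * (1 - p ^ 2))) * hp

lemma antitoneOn_log_ratio (hp₀ : 0 < p) (hp : p * (m + j) = m) :
    AntitoneOn (fun x => (2 * m + j) * log x + j * log (1 - x) - j * log (x - p ^ 2))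
      (Set.Ioo (p ^ 2) 1) := by
  refine antitoneOn_of_hasDerivWithinAt_nonpos (convex_Ioo _ _)
    (f' := fun x => -((m + j) * (1 + p) * (x - p) ^ 2) / (x * (1 - x) * (x - p ^ 2)))
    (fun x hx => (hasDerivAt_log_ratio hp hx).continuousAt.continuousWithinAt)
    (fun x hx => ?_) (fun x hx => ?_)
  · rw [interior_Ioo] at hx ⊢
    exact (hasDerivAt_log_ratio hp hx).hasDerivWithinAt
  · rw [interior_Ioo] at hx
    obtain ⟨hx₁, hx₂⟩ := hx
    have : 0 < x := (sq_nonneg p).trans_lt hx₁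
    have : 0 < 1 - x := by linarith
    have : 0 < x - p ^ 2 := by linarith
    exact div_nonpos_of_nonpos_of_nonneg (neg_nonpos.mpr (by positivity)) (by positivity)

/- At `x = p` the antitone log-ratio equals `2 m log p`. -/
lemma pow_mul_sub_sq_pow_le (hp₀ : 0 < p) (hp₁ : p < 1) (hp : p * (m + j) = m) {u : ℝ}
    (hu : p ^ 2 < u) (hup : u ≤ p) :
    p ^ (2 * m) * (u - p ^ 2) ^ j ≤ u ^ (2 * m + j) * (1 - u) ^ j := by
  have hu₀ : 0 < u := (sq_nonneg p).trans_lt hu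
  have hu₁ : 0 < 1 - u := by linarith
  have hup₂ : 0 < u - p ^ 2 := by linarith
  have hlog := antitoneOn_log_ratio hp₀ hp ⟨hu, by linarith⟩ ⟨by nlinarith, hp₁⟩ hup
  have hp_sub : log (p - p ^ 2) = log p + log (1 - p) := by
    rw [← log_mul hp₀.ne' (by linarith)]
    ring_nf
  rw [← log_le_log_iff (by positivity) (by positivity), log_mul (by positivity) (by positivity),
    log_mul (by positivity) (by positivity)]
  simp only [log_pow, hp_sub] at hlog ⊢
  push_cast
  linarith

lemma pow_mul_one_sub_pow_comp_sq_div_le {a : ℕ} (hp₀ : 0 < p) (hp₁ : p < 1)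
    (hp : p * (a + 1 + j) = a + 1) {x : ℝ} (hx : x ∈ Set.Ioo (p ^ 2) p) :
    (p ^ 2 / x) ^ a * (1 - p ^ 2 / x) ^ j * (p ^ 2 / x ^ 2) ≤ x ^ a * (1 - x) ^ j := by
  obtain ⟨hx₁, hx₂⟩ := hx
  have hx₀ : 0 < x := (sq_nonneg p).trans_lt hx₁
  have h := pow_mul_sub_sq_pow_le (m := a + 1) hp₀ hp₁ (by push_cast; linarith) hx₁ hx₂.le
  have hL : (p ^ 2 / x) ^ a * (1 - p ^ 2 / x) ^ j * (p ^ 2 / x ^ 2)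
      = p ^ (2 * (a + 1)) * (x - p ^ 2) ^ j / x ^ (a + 2 + j) := by
    rw [one_sub_div hx₀.ne', div_pow, div_pow]
    field_simp
    ring
  have hR : x ^ a * (1 - x) ^ j = x ^ (2 * (a + 1) + j) * (1 - x) ^ j / x ^ (a + 2 + j) := by
    field_simp
    ring
  rw [hL, hR]
  exact div_le_div_of_nonneg_right h (by positivity)

end TailComparison

lemma integral_pow_mul_one_sub_pow_nonneg (k m : ℕ) {a b : ℝ} (ha : 0 ≤ a) (hab : a ≤ b)
    (hb : b ≤ 1) : 0 ≤ ∫ t in a..b, t ^ k * (1 - t) ^ m :=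
  intervalIntegral.integral_nonneg hab fun t ht => by
    have : 0 ≤ 1 - t := by linarith [ht.2]
    have : 0 ≤ t := ha.trans ht.1
    positivity

lemma integral_comp_sq_div_mul {f : ℝ → ℝ} (hf : Continuous f) {p : ℝ} (hp : 0 < p) :
    ∫ x in (p ^ 2)..p, f (p ^ 2 / x) * (p ^ 2 / x ^ 2) = ∫ t in p..1, f t := by
  have hne : ∀ x ∈ Set.uIcc (p ^ 2) p, x ≠ 0 := fun x hx =>
    ((lt_inf_iff.mpr ⟨by positivity, hp⟩).trans_le hx.1).ne'
  have := intervalIntegral.integral_comp_mul_deriv (a := p ^ 2) (b := p)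
    (f := fun x => p ^ 2 / x) (f' := fun x => -(p ^ 2 / x ^ 2))
    (fun x hx => by simpa [div_eq_mul_inv] using (hasDerivAt_inv (hne x hx)).const_mul (p ^ 2))
    (ContinuousOn.neg (continuousOn_const.div (by fun_prop) fun x hx => pow_ne_zero 2 (hne x hx)))
    hf
  have hp_div : p ^ 2 / p = p := by field_simp
  simp only [Function.comp_apply, mul_neg, intervalIntegral.integral_neg,
    div_self (pow_ne_zero 2 hp.ne'), hp_div] at this
  rw [intervalIntegral.integral_symm 1 p, ← this, neg_neg]

lemma integral_pow_mul_one_sub_pow_upper_le_lower {a j : ℕ} {p : ℝ} (hp₀ : 0 < p) (hp₁ : p < 1)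
    (hp : p * (a + 1 + j) = a + 1) :
    ∫ t in p..1, t ^ a * (1 - t) ^ j ≤ ∫ t in 0..p, t ^ a * (1 - t) ^ j := by
  have hf : Continuous fun t : ℝ => t ^ a * (1 - t) ^ j := by fun_prop
  have hp₂ : p ^ 2 ≤ p := by nlinarith
  have hne : ∀ x ∈ Set.uIcc (p ^ 2) p, x ≠ 0 := fun x hx =>
    ((lt_inf_iff.mpr ⟨by positivity, hp₀⟩).trans_le hx.1).ne'
  have hcont : ContinuousOn (fun x => (p ^ 2 / x) ^ a * (1 - p ^ 2 / x) ^ j * (p ^ 2 / x ^ 2))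
      (Set.uIcc (p ^ 2) p) :=
    (hf.comp_continuousOn (continuousOn_const.div continuousOn_id hne)).mul
      (continuousOn_const.div (by fun_prop) fun x hx => pow_ne_zero 2 (hne x hx))
  calc ∫ t in p..1, t ^ a * (1 - t) ^ j
      = ∫ x in (p ^ 2)..p, (p ^ 2 / x) ^ a * (1 - p ^ 2 / x) ^ j * (p ^ 2 / x ^ 2) :=
        (integral_comp_sq_div_mul hf hp₀).symm
    _ ≤ ∫ x in (p ^ 2)..p, x ^ a * (1 - x) ^ j :=
        intervalIntegral.integral_mono_on_of_le_Ioo hp₂ hcont.intervalIntegrable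
          (hf.intervalIntegrable _ _) fun x hx => pow_mul_one_sub_pow_comp_sq_div_le hp₀ hp₁ hp hx
    _ ≤ ∫ x in 0..p, x ^ a * (1 - x) ^ j := by
        rw [← intervalIntegral.integral_add_adjacent_intervals (hf.intervalIntegrable 0 (p ^ 2))
          (hf.intervalIntegrable _ _)]
        linarith [integral_pow_mul_one_sub_pow_nonneg a j le_rfl (sq_nonneg p) (by nlinarith)]

lemma integral_pow_mul_one_sub_pow_lower_le_upper {k b : ℕ} (hk : k ≠ 0) {q : ℝ} (hq₀ : 0 ≤ q)
    (hq : (k + b + 1) * q ≤ k) :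
    ∫ t in 0..q, t ^ k * (1 - t) ^ b ≤ ∫ t in q..1, t ^ k * (1 - t) ^ b := by
  have hf : Continuous fun t : ℝ => t ^ k * (1 - t) ^ b := by fun_prop
  have hk₁ : (1 : ℝ) ≤ k := Nat.one_le_cast.mpr (Nat.one_le_iff_ne_zero.mpr hk)
  set P : ℝ := k / (k + b + 1)
  have hP₀ : 0 < P := by positivity
  have hP₁ : P < 1 := (div_lt_one (by positivity)).mpr (by linarith)
  have hqP : q ≤ P := (le_div_iff₀ (by positivity)).mpr (by linarith)
  have hreflect : ∀ x y : ℝ, ∫ t in x..y, t ^ k * (1 - t) ^ b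
      = ∫ t in (1 - y)..(1 - x), t ^ b * (1 - t) ^ k := fun x y => by
    rw [← intervalIntegral.integral_comp_sub_left]
    simp only [sub_sub_cancel, mul_comm]
  have hP : ∫ t in 0..P, t ^ k * (1 - t) ^ b ≤ ∫ t in P..1, t ^ k * (1 - t) ^ b := by
    rw [hreflect, hreflect, sub_self, sub_zero]
    refine integral_pow_mul_one_sub_pow_upper_le_lower (by linarith) (by linarith) ?_
    simp only [P]
    field_simp
    ring
  have hsplit₀ := intervalIntegral.integral_add_adjacent_intervals
    (hf.intervalIntegrable (μ := volume) 0 q) (hf.intervalIntegrable q P)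
  have hsplit₁ := intervalIntegral.integral_add_adjacent_intervals
    (hf.intervalIntegrable (μ := volume) q P) (hf.intervalIntegrable P 1)
  have hmid := integral_pow_mul_one_sub_pow_nonneg k b hq₀ hqP hP₁.le
  linarith

lemma one_half_le_sum_binomPMF {n k : ℕ} (hk : k ≠ 0) (hkn : k < n) {q : ℝ} (hq₀ : 0 ≤ q)
    (hq : n * q ≤ k) :
    1 / 2 ≤ ∑ j ∈ range (k + 1), binomPMF n q j := by
  obtain ⟨b, rfl⟩ : ∃ b, n = k + b + 1 := ⟨n - k - 1, by omega⟩
  have hkernel : ∀ x, ∫ t in 0..x, binomPMF (k + b) t k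
      = (k + b).choose k * ∫ t in 0..x, t ^ k * (1 - t) ^ b := fun x => by
    rw [← intervalIntegral.integral_const_mul]
    simp only [binomPMF, Nat.add_sub_cancel_left, mul_assoc]
  have hone : ∑ j ∈ range (k + 1), binomPMF (k + b + 1) 1 j = 0 :=
    sum_eq_zero fun j hj => by
      have : k + b + 1 - j ≠ 0 := by have := mem_range.mp hj; omega
      simp [binomPMF, this]
  have hrep₁ := sum_binomPMF_eq_one_sub_integral (k + b) k 1
  have hrep := sum_binomPMF_eq_one_sub_integral (k + b) k q
  rw [hone, hkernel] at hrep₁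
  rw [hrep, hkernel]
  have hf : Continuous fun t : ℝ => t ^ k * (1 - t) ^ b := by fun_prop
  have hsplit := intervalIntegral.integral_add_adjacent_intervals
    (hf.intervalIntegrable (μ := volume) 0 q) (hf.intervalIntegrable q 1)
  have hhalf := integral_pow_mul_one_sub_pow_lower_le_upper hk hq₀ (by exact_mod_cast hq)
  have hC : 0 ≤ ((k + b : ℕ) + 1 : ℝ) * (k + b).choose k := by positivity
  push_cast at hrep₁ hC ⊢
  nlinarith

lemma pow_le_pow_mul_exp_sub {x : ℝ} (hx : 0 ≤ x) (k : ℕ) : x ^ k ≤ k ^ k * exp (x - k) := by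
  rcases k.eq_zero_or_pos with rfl | hk
  · simpa using one_le_exp hx
  have hk' : (0 : ℝ) < k := Nat.cast_pos.mpr hk
  calc x ^ k = k ^ k * (x / k) ^ k := by rw [← mul_pow, mul_div_cancel₀ _ hk'.ne']
    _ ≤ k ^ k * exp (x / k - 1) ^ k := by
        gcongr
        linarith [add_one_le_exp (x / k - 1)]
    _ = k ^ k * exp (x - k) := by
        rw [← exp_nat_mul]
        congr 2
        field_simp

lemma pow_mul_one_sub_pow_mul_le {q : ℝ} (hq₀ : 0 ≤ q) (hq₁ : q ≤ 1) (k m : ℕ) :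
    q ^ k * (1 - q) ^ m * ((k + m : ℕ) : ℝ) ^ (k + m) ≤ (k : ℝ) ^ k * (m : ℝ) ^ m := by
  set n : ℝ := ((k + m : ℕ) : ℝ)
  have hn : n = k + m := by push_cast [n]; rfl
  have h₁ := pow_le_pow_mul_exp_sub (mul_nonneg (Nat.cast_nonneg (k + m)) hq₀) k
  have h₂ := pow_le_pow_mul_exp_sub (mul_nonneg (Nat.cast_nonneg (k + m)) (sub_nonneg.mpr hq₁)) m
  calc q ^ k * (1 - q) ^ m * n ^ (k + m) = (n * q) ^ k * (n * (1 - q)) ^ m := by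
        rw [mul_pow, mul_pow, pow_add]
        ring
    _ ≤ (k ^ k * exp (n * q - k)) * (m ^ m * exp (n * (1 - q) - m)) :=
        mul_le_mul h₁ h₂ (by positivity) (by positivity)
    _ = (k : ℝ) ^ k * (m : ℝ) ^ m := by
        rw [mul_mul_mul_comm, ← exp_add, hn]
        ring_nf
        simp

/- The Stirling sequence `n! / (√(2n) (n/e)^n)` decreases from its value `e / √2` at `n = 1`. -/
lemma factorial_le_exp_one_mul_sqrt {n : ℕ} (hn : n ≠ 0) :
    (n ! : ℝ) ≤ exp 1 * √n * (n / exp 1) ^ n := by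
  obtain ⟨n, rfl⟩ := Nat.exists_eq_add_one_of_ne_zero hn
  have h : Stirling.stirlingSeq (n + 1) ≤ exp 1 / √2 :=
    Stirling.stirlingSeq_one ▸ Stirling.stirlingSeq'_antitone (Nat.zero_le n)
  rw [Stirling.stirlingSeq, div_le_div_iff₀ (by positivity) (by positivity),
    sqrt_mul zero_le_two] at h
  have h2 : (0 : ℝ) < √2 := by positivity
  nlinarith

lemma binomPMF_mul_two_pi_sqrt_le {k m : ℕ} (hk : k ≠ 0) (hm : m ≠ 0) {q : ℝ} (hq₀ : 0 ≤ q)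
    (hq₁ : q ≤ 1) :
    binomPMF (k + m) q k * (2 * π * √(k * m)) ≤ exp 1 * √(k + m : ℕ) := by
  set n := k + m
  have hchoose : ((n.choose k * k ! * m ! : ℕ) : ℝ) = n ! := by
    rw [← Nat.choose_mul_factorial_mul_factorial (Nat.le_add_right k m), Nat.add_sub_cancel_left]
  have hsqrt : √(2 * π * k) * √(2 * π * m) = 2 * π * √(k * m) := by
    rw [← sqrt_mul (by positivity), show 2 * π * k * (2 * π * m) = (2 * π) ^ 2 * (k * m) by ring,
      sqrt_mul (by positivity), sqrt_sq (by positivity)]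
  have hq : 0 ≤ q ^ k * (1 - q) ^ m := by
    have : 0 ≤ 1 - q := by linarith
    positivity
  set D : ℝ := (k / exp 1) ^ k * (m / exp 1) ^ m
  have hD : 0 < D := by
    have : (0 : ℝ) < k := by positivity
    have : (0 : ℝ) < m := by positivity
    positivity
  refine le_of_mul_le_mul_right ?_ hD
  calc binomPMF n q k * (2 * π * √(k * m)) * D
      = n.choose k * (q ^ k * (1 - q) ^ m) *
          ((√(2 * π * k) * (k / exp 1) ^ k) * (√(2 * π * m) * (m / exp 1) ^ m)) := by
        rw [← hsqrt, binomPMF, Nat.add_sub_cancel_left]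
        ring
    _ ≤ n.choose k * (q ^ k * (1 - q) ^ m) * (k ! * m !) := by
        gcongr <;> exact Stirling.le_factorial_stirling _
    _ = n ! * (q ^ k * (1 - q) ^ m) := by
        rw [← hchoose]
        push_cast
        ring
    _ ≤ exp 1 * √n * (n / exp 1) ^ n * (q ^ k * (1 - q) ^ m) := by
        gcongr
        exact factorial_le_exp_one_mul_sqrt (by omega)
    _ = exp 1 * √n / exp 1 ^ n * (q ^ k * (1 - q) ^ m * (n : ℝ) ^ n) := by
        rw [div_pow]
        ring
    _ ≤ exp 1 * √n / exp 1 ^ n * ((k : ℝ) ^ k * (m : ℝ) ^ m) :=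
        mul_le_mul_of_nonneg_left (pow_mul_one_sub_pow_mul_le hq₀ hq₁ k m) (by positivity)
    _ = exp 1 * √n * D := by
        simp only [D, div_pow, n, pow_add]
        field_simp

lemma exp_one_pow_three_lt_four_mul_pi_sq : exp 1 ^ 3 < 4 * π ^ 2 := by
  have : exp 1 ^ 3 < 3 ^ 3 := pow_lt_pow_left₀ exp_one_lt_three (exp_pos 1).le (by norm_num)
  have : 3 ^ 2 < π ^ 2 := pow_lt_pow_left₀ pi_gt_three (by norm_num) (by norm_num)
  linarith

lemma two_lt_mul_one_sub_of_eight_le {n : ℕ} {q : ℝ} (hvar : 8 ≤ exp 1 * (n * q * (1 - q))) :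
    2 < n * (1 - q) := by
  have : n * q * (1 - q) ≤ n * (1 - q) := by nlinarith [sq_nonneg (1 - q), n.cast_nonneg (α := ℝ)]
  nlinarith [exp_one_lt_three, exp_pos 1]

lemma binomPMF_lt_sqrt {n k : ℕ} {q : ℝ} (hq₀ : 0 < q) (hq₁ : q < 1) (hk : n * q ≤ k)
    (hk' : k < n * q + 1) (hvar : 8 ≤ exp 1 * (n * q * (1 - q))) :
    binomPMF n q k < √(2 / (exp 1 * n * q * (1 - q))) := by
  have hn : (0 : ℝ) < n := Nat.cast_pos.mpr (Nat.pos_of_ne_zero (by rintro rfl; norm_num at hvar))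
  have hn₁ := two_lt_mul_one_sub_of_eight_le hvar
  obtain ⟨m, rfl⟩ : ∃ m, n = k + m := ⟨n - k, by
    have : (k : ℝ) < n := by linarith
    exact (Nat.add_sub_of_le (by exact_mod_cast this.le)).symm⟩
  set N : ℝ := ((k + m : ℕ) : ℝ)
  have hN : N = k + m := by push_cast [N]; rfl
  have hk₀ : (0 : ℝ) < k := by nlinarith
  have hm₀ : N * (1 - q) / 2 < m := by linarith
  have hm₀' : (0 : ℝ) < m := by linarith
  -- `k ≥ nq` and `m > n(1 - q) - 1 ≥ n(1 - q)/2` give `km > n² q(1 - q) / 2`.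
  have hkm : exp 1 ^ 3 * (N ^ 2 * q * (1 - q)) < 8 * π ^ 2 * (k * m) := by
    have : N ^ 2 * q * (1 - q) < 2 * (k * m) := by nlinarith
    calc exp 1 ^ 3 * (N ^ 2 * q * (1 - q)) < 4 * π ^ 2 * (N ^ 2 * q * (1 - q)) := by
          gcongr
          exact exp_one_pow_three_lt_four_mul_pi_sq
      _ ≤ 8 * π ^ 2 * (k * m) := by nlinarith [pi_pos]
  have hA := binomPMF_mul_two_pi_sqrt_le (k := k) (m := m) (by exact_mod_cast hk₀.ne')
    (by exact_mod_cast hm₀'.ne') hq₀.le hq₁.le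
  have hA₀ := binomPMF_nonneg (n := k + m) hq₀.le hq₁.le k
  have hA₂ : binomPMF (k + m) q k ^ 2 * (4 * π ^ 2 * (k * m)) ≤ exp 1 ^ 2 * N :=
    calc binomPMF (k + m) q k ^ 2 * (4 * π ^ 2 * (k * m))
        = (binomPMF (k + m) q k * (2 * π * √(k * m))) ^ 2 := by
          rw [mul_pow, mul_pow, sq_sqrt (by positivity)]
          ring
      _ ≤ (exp 1 * √N) ^ 2 := pow_le_pow_left₀ (by positivity) hA 2
      _ = exp 1 ^ 2 * N := by rw [mul_pow, sq_sqrt hn.le]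
  rw [lt_sqrt hA₀, lt_div_iff₀ (by positivity)]
  refine lt_of_mul_lt_mul_right ?_ (by positivity : (0 : ℝ) ≤ 4 * π ^ 2 * (k * m))
  calc binomPMF (k + m) q k ^ 2 * (exp 1 * N * q * (1 - q)) * (4 * π ^ 2 * (k * m))
      = binomPMF (k + m) q k ^ 2 * (4 * π ^ 2 * (k * m)) * (exp 1 * N * q * (1 - q)) := by ring
    _ ≤ exp 1 ^ 2 * N * (exp 1 * N * q * (1 - q)) := by gcongr
    _ = exp 1 ^ 3 * (N ^ 2 * q * (1 - q)) := by ring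
    _ < 2 * (4 * π ^ 2 * (k * m)) := by linarith

lemma one_half_sub_lt_binomCDF {n k : ℕ} (hn : 0 < n) {q : ℝ} (hq₀ : 0 < q) (hq₁ : q < 1)
    (hk : n * q - 1 < k) :
    1 / 2 - √(2 / (exp 1 * n * q * (1 - q))) < binomCDF n q k := by
  rcases lt_or_ge (1 / 2) √(2 / (exp 1 * n * q * (1 - q))) with hδ | hδ
  · exact (sub_neg.mpr hδ).trans_le (binomCDF_nonneg hq₀.le hq₁.le _)
  have hX : 0 < exp 1 * n * q * (1 - q) := by
    have := sub_pos.mpr hq₁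
    positivity
  have hvar : 8 ≤ exp 1 * (n * q * (1 - q)) := by
    rw [sqrt_le_left (by norm_num), div_le_iff₀ hX] at hδ
    linarith
  have hnq := two_lt_mul_one_sub_of_eight_le hvar
  set c := ⌈n * q⌉₊
  have hc : n * q ≤ c := Nat.le_ceil _
  have hc' : (c : ℝ) < n * q + 1 := Nat.ceil_lt_add_one (by positivity)
  have hc₀ : c ≠ 0 := (Nat.ceil_pos.mpr (by positivity)).ne'
  have hcn : c < n := by
    have : (c : ℝ) < n := by linarith
    exact_mod_cast this
  have hck : c - 1 ≤ k := Nat.sub_le_of_le_add (Nat.ceil_le.mpr (by push_cast; linarith))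
  have hmed := one_half_le_sum_binomPMF hc₀ hcn hq₀.le hc
  have hpmf := binomPMF_lt_sqrt hq₀ hq₁ hc hc' hvar
  have hmono := binomCDF_mono (n := n) hq₀.le hq₁.le (Nat.cast_le.mpr hck)
  rw [binomCDF_natCast _ (by omega), Nat.sub_add_cancel (Nat.one_le_iff_ne_zero.mpr hc₀)] at hmono
  rw [sum_range_succ] at hmed
  linarith

theorem binomQuantile_le_of_power_general
    (n2 : ℕ) (hn2 : 0 < n2)
    (p2 q2 α : ℝ)
    (hq2 : 0 < q2) (hq2' : q2 < 1)
    (hpower : 1 - binomCDF n2 q2 (binomQuantile n2 p2 (1 - α)) ≥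
      1 / 2 + Real.sqrt (2 / (Real.exp 1 * n2 * q2 * (1 - q2)))) :
    binomQuantile n2 p2 (1 - α) ≤ (n2 : ℝ) * q2 - 1 := by
  obtain ⟨k, hk⟩ := exists_binomQuantile_eq_natCast n2 p2 (1 - α)
  rw [hk] at hpower ⊢
  by_contra! hlt
  have := one_half_sub_lt_binomCDF hn2 hq2 hq2' (by linarith : (n2 : ℝ) * q2 - 1 < k)
  linarith

theorem binomQuantile_le_of_power
    (n2 : ℕ) (hn2 : 0 < n2)
    (p2 q2 α : ℝ)
    (hp2 : 0 < p2) (hp2' : p2 < 1)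
    (hq2 : 0 < q2) (hq2' : q2 < 1)
    (hα0 : 0 < α) (hα1 : α < 1)
    (hpower : 1 - binomCDF n2 q2 (binomQuantile n2 p2 (1 - α)) ≥
      1 / 2 + Real.sqrt (2 / (Real.exp 1 * n2 * q2 * (1 - q2)))) :
    binomQuantile n2 p2 (1 - α) ≤ (n2 : ℝ) * q2 - 1 :=
  binomQuantile_le_of_power_general n2 hn2 p2 q2 α hq2 hq2' hpower
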